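/- arXiv:2207.09123 — 5 statements merged into one kernel-verified Lean document; each statement's English description precedes it below -/
import Mathlib

section
/- Let $d$ be a positive integer and $v \in \mathfrak{S}_d$. Suppose that for all $1 \le i < j \le d$, either $v(i) < v(j)$ or $v(\overline{i}) > v(\overline{j})$, where $\overline{i} := d - i + 1$. Then the number of inversions of $\check{v} v^{-1}$ equals twice the number of inversions of $v$, where $\check{v}(i) := \overline{v(\overline{i})}$. -/
/-- `σ̌(i) = m - σ(m-i+1) + 1`, i.e. `rev ∘ σ ∘ rev` in zero-based indexing. -/
def checkPerm {d : ℕ} (σ : Equiv.Perm (Fin d)) : Equiv.Perm (Fin d) :=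
  (Fin.revPerm.trans σ).trans Fin.revPerm

/-- The number of inversions `ℓ_d(σ) = #{i < j | σ(i) > σ(j)}`. -/
def inversions {d : ℕ} (σ : Equiv.Perm (Fin d)) : ℕ :=
  (Finset.univ.filter fun p : Fin d × Fin d => p.1 < p.2 ∧ σ p.2 < σ p.1).card

/-- If for all `i < j` either `v(i) < v(j)` or `v(ī) > v(j̄)` (where `ī = d - i + 1`),
then `ℓ_d(v̌ v⁻¹) = 2 ℓ_d(v)`. -/
theorem inversions_check_mul_inv (d : ℕ) (hd : 0 < d) (v : Equiv.Perm (Fin d))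
    (hv : ∀ i j : Fin d, i < j → v i < v j ∨ v j.rev < v i.rev) :
    inversions (checkPerm v * v⁻¹) = 2 * inversions v := by
  classical
  have hA : ∀ i j : Fin d, i < j → v j < v i → v j.rev < v i.rev := by
    intro i j hij hvji
    rcases hv i j hij with h | h
    · exact absurd h (not_lt.mpr hvji.le)
    · exact h
  set T : Finset (Fin d × Fin d) :=
    Finset.univ.filter fun p : Fin d × Fin d => v p.1 < v p.2 ∧ v p.1.rev < v p.2.rev with hT
  have h1 : inversions (checkPerm v * v⁻¹) = T.card := by
    unfold inversions
    apply Finset.card_equiv (Equiv.prodCongr v⁻¹ v⁻¹)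
    intro p
    simp only [hT, Finset.mem_filter, Finset.mem_univ, true_and, checkPerm,
      Equiv.Perm.mul_apply, Equiv.trans_apply, Fin.revPerm_apply, Equiv.prodCongr_apply,
      Prod.map_fst, Prod.map_snd, Equiv.Perm.coe_inv, Equiv.apply_symm_apply, Fin.rev_lt_rev]
  have hsplit : T.card =
      (T.filter fun p => p.1 < p.2).card + (T.filter fun p => ¬ p.1 < p.2).card := by
    rw [Finset.card_filter_add_card_filter_not]
  have hc1 : (T.filter fun p => p.1 < p.2).card = inversions v := by
    unfold inversions
    apply Finset.card_nbij' (fun p : Fin d × Fin d => (p.2.rev, p.1.rev))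
      (fun q : Fin d × Fin d => (q.2.rev, q.1.rev))
    · intro p hp
      simp only [hT, Finset.mem_coe, Finset.mem_filter, Finset.mem_univ, true_and] at hp ⊢
      exact ⟨Fin.rev_lt_rev.mpr hp.2, by simpa [Fin.rev_rev] using hp.1.2⟩
    · intro q hq
      simp only [hT, Finset.mem_coe, Finset.mem_filter, Finset.mem_univ, true_and] at hq ⊢
      refine ⟨⟨hA q.1 q.2 hq.1 hq.2, ?_⟩, Fin.rev_lt_rev.mpr hq.1⟩
      simpa [Fin.rev_rev] using hq.2
    · intro p _; simp [Fin.rev_rev]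
    · intro q _; simp [Fin.rev_rev]
  have hc2 : (T.filter fun p => ¬ p.1 < p.2).card = inversions v := by
    unfold inversions
    apply Finset.card_nbij' (fun p : Fin d × Fin d => (p.2, p.1))
      (fun q : Fin d × Fin d => (q.2, q.1))
    · intro p hp
      simp only [hT, Finset.mem_coe, Finset.mem_filter, Finset.mem_univ, true_and] at hp ⊢
      refine ⟨lt_of_le_of_ne (not_lt.mp hp.2) ?_, hp.1.1⟩
      intro h; exact absurd (congrArg v h) (ne_of_gt hp.1.1)
    · intro q hq
      simp only [hT, Finset.mem_coe, Finset.mem_filter, Finset.mem_univ, true_and] at hq ⊢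
      exact ⟨⟨hq.2, hA q.1 q.2 hq.1 hq.2⟩, not_lt.mpr hq.1.le⟩
    · intro p _; rfl
    · intro q _; rfl
  omega
end

section
/- Let $d$ be a positive integer and $v \in \mathfrak{S}_d$. Then the number of inversions of $\check{v} v^{-1}$ equals $2\ell_d(v) - 2\,\#\{1 \le i < j \le d \mid v(i) > v(j) \text{ and } v(\overline{i}) < v(\overline{j})\}$. -/
/-- `ℓ_d(v̌ v⁻¹) = 2 ℓ_d(v) - 2 #{i < j | v(i) > v(j) and v(ī) < v(j̄)}`. -/
theorem inversions_check_mul_inv_formula (d : ℕ) (hd : 0 < d) (v : Equiv.Perm (Fin d)) :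
    (inversions (checkPerm v * v⁻¹) : ℤ) =
      2 * inversions v -
        2 * (Finset.univ.filter fun p : Fin d × Fin d =>
              p.1 < p.2 ∧ v p.2 < v p.1 ∧ v p.1.rev < v p.2.rev).card := by
  classical
  set T := Finset.univ.filter
      (fun p : Fin d × Fin d => p.1 < p.2 ∧ v p.2 < v p.1 ∧ v p.2.rev < v p.1.rev) with hT
  set U := Finset.univ.filter
      (fun p : Fin d × Fin d => p.1 < p.2 ∧ v p.2 < v p.1 ∧ v p.1.rev < v p.2.rev) with hU
  -- splitting the inversions of v
  have hsplit : inversions v = T.card + U.card := by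
    rw [inversions, ← Finset.card_union_of_disjoint]
    · congr 1
      ext p
      simp only [hT, hU, Finset.mem_union, Finset.mem_filter, Finset.mem_univ, true_and]
      constructor
      · rintro ⟨h1, h2⟩
        have hne : v p.2.rev ≠ v p.1.rev := by
          intro h
          exact absurd (Fin.rev_injective (v.injective h)) (ne_of_gt h1)
        rcases hne.lt_or_gt with h | h
        · exact Or.inl ⟨h1, h2, h⟩
        · exact Or.inr ⟨h1, h2, h⟩
      · rintro (⟨h1, h2, _⟩ | ⟨h1, h2, _⟩) <;> exact ⟨h1, h2⟩
    · rw [Finset.disjoint_left]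
      rintro p hp hq
      simp only [hT, hU, Finset.mem_filter] at hp hq
      exact absurd hq.2.2.2 (not_lt_of_gt hp.2.2.2)
  -- evaluation of the product permutation
  have hw : ∀ a : Fin d, (checkPerm v * v⁻¹) a = (v (v⁻¹ a).rev).rev := by
    intro a
    simp [checkPerm, Equiv.Perm.mul_apply]
  -- inversions of w equal S.card for S below
  set S := Finset.univ.filter
      (fun p : Fin d × Fin d => v p.1 < v p.2 ∧ v p.1.rev < v p.2.rev) with hS
  have hWS : inversions (checkPerm v * v⁻¹) = S.card := by
    rw [inversions]
    apply Finset.card_nbij' (fun p => (v⁻¹ p.1, v⁻¹ p.2)) (fun q => (v q.1, v q.2))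
    · rintro ⟨a, b⟩ hab
      simp only [Finset.mem_coe, Finset.mem_filter, Finset.mem_univ, true_and] at hab
      simp only [hS, Finset.mem_coe, Finset.mem_filter, Finset.mem_univ, true_and]
      rw [hw a, hw b] at hab
      refine ⟨by simpa using hab.1, ?_⟩
      exact (Fin.rev_lt_rev).mp hab.2
    · rintro ⟨i, j⟩ hij
      simp only [hS, Finset.mem_coe, Finset.mem_filter, Finset.mem_univ, true_and] at hij
      simp only [Finset.mem_coe, Finset.mem_filter, Finset.mem_univ, true_and]
      rw [hw (v i), hw (v j)]
      simp only [Equiv.Perm.inv_def, Equiv.symm_apply_apply]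
      exact ⟨hij.1, Fin.rev_lt_rev.mpr hij.2⟩
    · rintro ⟨a, b⟩ _; simp
    · rintro ⟨i, j⟩ _; simp
  -- S splits into two copies of T
  have hS1 : (S.filter (fun p => p.1 < p.2)).card = T.card := by
    apply Finset.card_nbij' (fun p => (p.2.rev, p.1.rev)) (fun q => (q.2.rev, q.1.rev))
    · rintro ⟨i, j⟩ hij
      simp only [hS, Finset.mem_coe, Finset.mem_filter, Finset.mem_univ, true_and] at hij
      obtain ⟨⟨h1, h2⟩, h3⟩ := hij
      simp only [hT, Finset.mem_coe, Finset.mem_filter, Finset.mem_univ, true_and, Fin.rev_rev]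
      exact ⟨Fin.rev_lt_rev.mpr h3, h2, h1⟩
    · rintro ⟨i, j⟩ hij
      simp only [hT, Finset.mem_coe, Finset.mem_filter, Finset.mem_univ, true_and] at hij
      obtain ⟨h1, h2, h3⟩ := hij
      simp only [hS, Finset.mem_coe, Finset.mem_filter, Finset.mem_univ, true_and, Fin.rev_rev]
      exact ⟨⟨h3, h2⟩, Fin.rev_lt_rev.mpr h1⟩
    · rintro ⟨i, j⟩ _; simp
    · rintro ⟨i, j⟩ _; simp
  have hS2 : (S.filter (fun p => ¬ p.1 < p.2)).card = T.card := by
    apply Finset.card_nbij' (fun p => (p.2, p.1)) (fun q => (q.2, q.1))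
    · rintro ⟨i, j⟩ hij
      simp only [hS, Finset.mem_coe, Finset.mem_filter, Finset.mem_univ, true_and] at hij
      obtain ⟨⟨h1, h2⟩, h3⟩ := hij
      have hne : i ≠ j := by rintro rfl; exact lt_irrefl _ h1
      have : j < i := (hne.lt_or_gt.resolve_left h3)
      simp only [hT, Finset.mem_coe, Finset.mem_filter, Finset.mem_univ, true_and]
      exact ⟨this, h1, h2⟩
    · rintro ⟨i, j⟩ hij
      simp only [hT, Finset.mem_coe, Finset.mem_filter, Finset.mem_univ, true_and] at hij
      obtain ⟨h1, h2, h3⟩ := hij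
      simp only [hS, Finset.mem_coe, Finset.mem_filter, Finset.mem_univ, true_and]
      exact ⟨⟨h2, h3⟩, not_lt_of_gt h1⟩
    · rintro ⟨i, j⟩ _; simp
    · rintro ⟨i, j⟩ _; simp
  have hWT : inversions (checkPerm v * v⁻¹) = 2 * T.card := by
    rw [hWS, ← Finset.card_filter_add_card_filter_not (s := S)
      (p := fun p => p.1 < p.2), hS1, hS2]
    ring
  rw [hWT, hsplit]
  push_cast
  ring
end

section
/- Let $d$ be a positive integer and $v \in \mathfrak{S}_d$. Then there exists $\sigma \in \mathfrak{S}_d$ with $\check{\sigma} = \sigma$ such that for all $1 \le i < j \le d$, either $v\sigma(i) < v\sigma(j)$ or $v\sigma(\overline{i}) > v\sigma(\overline{j})$. -/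
namespace CheckAux

variable {d : ℕ} (f : Equiv.Perm (Fin d))

/-- number of "small" pair-elements below `x` -/
def rnk (x : Fin d) : ℕ :=
  (Finset.univ.filter (fun y => y < f y ∧ y < x)).card

/-- total number of "small" pair-elements -/
def K : ℕ := (Finset.univ.filter (fun y : Fin d => y < f y)).card

lemma rnk_lt_K {x : Fin d} (hx : x < f x) : rnk f x < K f := by
  apply Finset.card_lt_card
  refine ⟨fun z hz => ?_, fun hsub => ?_⟩
  · simp only [Finset.mem_filter] at *
    exact ⟨hz.1, hz.2.1⟩
  · have hmem : x ∈ Finset.univ.filter (fun y => y < f y) := by simp [hx]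
    have := hsub hmem
    simp at this

lemma rnk_lt_rnk {x y : Fin d} (hx : x < f x) (hxy : x < y) :
    rnk f x < rnk f y := by
  apply Finset.card_lt_card
  refine ⟨fun z hz => ?_, fun hsub => ?_⟩
  · simp only [Finset.mem_filter] at *
    exact ⟨hz.1, hz.2.1, hz.2.2.trans hxy⟩
  · have hmem : x ∈ Finset.univ.filter (fun z => z < f z ∧ z < y) := by simp [hx, hxy]
    have := hsub hmem
    simp at this

lemma two_K_add (hinv : ∀ x, f (f x) = x) :
    2 * K f + (Finset.univ.filter (fun y : Fin d => f y = y)).card = d := by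
  classical
  have hAB : K f = (Finset.univ.filter (fun y : Fin d => f y < y)).card := by
    apply Finset.card_bij' (fun y _ => f y) (fun y _ => f y)
    · intro a ha
      simp only [Finset.mem_filter, Finset.mem_univ, true_and] at *
      rw [hinv]; exact ha
    · intro a ha
      simp only [Finset.mem_filter, Finset.mem_univ, true_and] at *
      rw [hinv]; exact ha
    · intro a _; exact hinv a
    · intro a _; exact hinv a
  have hneg : (Finset.univ.filter (fun y : Fin d => ¬ y < f y)) =
      (Finset.univ.filter (fun y : Fin d => f y < y)) ∪
      (Finset.univ.filter (fun y : Fin d => f y = y)) := by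
    ext z
    simp only [Finset.mem_filter, Finset.mem_univ, true_and, Finset.mem_union, not_lt]
    constructor
    · intro h
      rcases lt_or_eq_of_le h with h' | h'
      · exact Or.inl h'
      · exact Or.inr h'
    · rintro (h | h)
      · exact le_of_lt h
      · exact le_of_eq h
  have hdisj : Disjoint (Finset.univ.filter (fun y : Fin d => f y < y))
      (Finset.univ.filter (fun y : Fin d => f y = y)) := by
    rw [Finset.disjoint_left]
    intro z hz hz'
    simp only [Finset.mem_filter, Finset.mem_univ, true_and] at hz hz'
    rw [hz'] at hz
    exact lt_irrefl _ hz
  have htot := Finset.card_filter_add_card_filter_not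
    (s := (Finset.univ : Finset (Fin d))) (p := fun y : Fin d => y < f y)
  rw [hneg, Finset.card_union_of_disjoint hdisj] at htot
  simp only [Finset.card_univ, Fintype.card_fin] at htot
  have hKA : (Finset.univ.filter (fun y : Fin d => y < f y)).card
      = (Finset.univ.filter (fun y : Fin d => f y < y)).card := hAB
  unfold K
  omega


lemma card_fix_le_one (huniq : ∀ x y : Fin d, f x = x → f y = y → x = y) :
    (Finset.univ.filter (fun y : Fin d => f y = y)).card ≤ 1 := by
  apply Finset.card_le_one.mpr
  intro a ha b hb
  simp only [Finset.mem_filter, Finset.mem_univ, true_and] at ha hb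
  exact huniq a b ha hb

/-- position (0-based) assigned to value `x` -/
def pnat (x : Fin d) : ℕ :=
  if x < f x then rnk f x
  else if f x < x then d - 1 - rnk f (f x)
  else (d - 1) / 2

lemma pnat_min {x : Fin d} (h : x < f x) : pnat f x = rnk f x := by
  simp [pnat, h]

lemma pnat_max {x : Fin d} (h : f x < x) : pnat f x = d - 1 - rnk f (f x) := by
  have : ¬ x < f x := not_lt.mpr (le_of_lt h)
  simp [pnat, this, h]

lemma pnat_fix {x : Fin d} (h : f x = x) : pnat f x = (d - 1) / 2 := by
  simp [pnat, h]

lemma fx_min {x : Fin d} (hinv : ∀ x, f (f x) = x) (h : f x < x) : f x < f (f x) := by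
  rw [hinv]; exact h

section props
variable (hinv : ∀ x, f (f x) = x) (huniq : ∀ x y : Fin d, f x = x → f y = y → x = y)
include hinv huniq

lemma pnat_lt (x : Fin d) : pnat f x < d := by
  have hd : 0 < d := x.pos
  have h2 := two_K_add f hinv
  rcases lt_trichotomy x (f x) with h | h | h
  · have h1 := rnk_lt_K f h
    rw [pnat_min f h]; omega
  · rw [pnat_fix f h.symm]; omega
  · rw [pnat_max f h]; omega

lemma pnat_sym (x : Fin d) : pnat f (f x) = d - 1 - pnat f x := by
  have h2 := two_K_add f hinv
  rcases lt_trichotomy x (f x) with h | h | h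
  · have hmax : f (f x) < f x := by rw [hinv]; exact h
    rw [pnat_max f hmax, pnat_min f h, hinv]
  · have hfx : f x = x := h.symm
    rw [hfx, pnat_fix f hfx]
    have hc1 : 1 ≤ (Finset.univ.filter (fun y : Fin d => f y = y)).card :=
      Finset.card_pos.mpr ⟨x, by simp [hfx]⟩
    have hc2 := card_fix_le_one f huniq
    omega
  · have hmin : f x < f (f x) := fx_min f hinv h
    have h1 := rnk_lt_K f hmin
    rw [pnat_min f hmin, pnat_max f h]
    omega

lemma pnat_inj {x y : Fin d} (hxy : pnat f x = pnat f y) : x = y := by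
  have h2 := two_K_add f hinv
  have hc2 := card_fix_le_one f huniq
  rcases lt_trichotomy x (f x) with h | h | h <;>
    rcases lt_trichotomy y (f y) with h' | h' | h'
  · -- min min
    rw [pnat_min f h, pnat_min f h'] at hxy
    rcases lt_trichotomy x y with hh | hh | hh
    · exact absurd hxy (ne_of_lt (rnk_lt_rnk f h hh))
    · exact hh
    · exact absurd hxy.symm (ne_of_lt (rnk_lt_rnk f h' hh))
  · -- min fix
    have hc1 : 1 ≤ (Finset.univ.filter (fun z : Fin d => f z = z)).card :=
      Finset.card_pos.mpr ⟨y, by simp [h'.symm]⟩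
    have h1 := rnk_lt_K f h
    rw [pnat_min f h, pnat_fix f h'.symm] at hxy
    omega
  · -- min max
    have h1 := rnk_lt_K f h
    have h3 := rnk_lt_K f (fx_min f hinv h')
    rw [pnat_min f h, pnat_max f h'] at hxy
    omega
  · -- fix min
    have hc1 : 1 ≤ (Finset.univ.filter (fun z : Fin d => f z = z)).card :=
      Finset.card_pos.mpr ⟨x, by simp [h.symm]⟩
    have h1 := rnk_lt_K f h'
    rw [pnat_fix f h.symm, pnat_min f h'] at hxy
    omega
  · -- fix fix
    exact huniq x y h.symm h'.symm
  · -- fix max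
    have hc1 : 1 ≤ (Finset.univ.filter (fun z : Fin d => f z = z)).card :=
      Finset.card_pos.mpr ⟨x, by simp [h.symm]⟩
    have h3 := rnk_lt_K f (fx_min f hinv h')
    rw [pnat_fix f h.symm, pnat_max f h'] at hxy
    omega
  · -- max min
    have h1 := rnk_lt_K f h'
    have h3 := rnk_lt_K f (fx_min f hinv h)
    rw [pnat_max f h, pnat_min f h'] at hxy
    omega
  · -- max fix
    have hc1 : 1 ≤ (Finset.univ.filter (fun z : Fin d => f z = z)).card :=
      Finset.card_pos.mpr ⟨y, by simp [h'.symm]⟩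
    have h3 := rnk_lt_K f (fx_min f hinv h)
    rw [pnat_max f h, pnat_fix f h'.symm] at hxy
    omega
  · -- max max
    have h3 := rnk_lt_K f (fx_min f hinv h)
    have h4 := rnk_lt_K f (fx_min f hinv h')
    rw [pnat_max f h, pnat_max f h'] at hxy
    have heq : rnk f (f x) = rnk f (f y) := by omega
    have : f x = f y := by
      rcases lt_trichotomy (f x) (f y) with hh | hh | hh
      · exact absurd heq (ne_of_lt (rnk_lt_rnk f (fx_min f hinv h) hh))
      · exact hh
      · exact absurd heq.symm (ne_of_lt (rnk_lt_rnk f (fx_min f hinv h') hh))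
    have := congrArg f this
    rwa [hinv, hinv] at this

lemma pnat_main {x y : Fin d} (hpq : pnat f x < pnat f y) :
    x < y ∨ f y < f x := by
  have h2 := two_K_add f hinv
  have hc2 := card_fix_le_one f huniq
  rcases lt_trichotomy x (f x) with h | h | h <;>
    rcases lt_trichotomy y (f y) with h' | h' | h'
  · -- min min : x < y
    left
    rcases lt_trichotomy x y with hh | hh | hh
    · exact hh
    · rw [hh] at hpq; exact absurd hpq (lt_irrefl _)
    · rw [pnat_min f h, pnat_min f h'] at hpq
      exact absurd (rnk_lt_rnk f h' hh) (not_lt.mpr (le_of_lt hpq))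
  · -- min fix : always
    rcases lt_trichotomy x y with hh | hh | hh
    · exact Or.inl hh
    · rw [hh, h'.symm] at h; exact absurd h (lt_irrefl _)
    · right; rw [h'.symm]; exact lt_trans hh h
  · -- min max : always
    rcases lt_trichotomy x y with hh | hh | hh
    · exact Or.inl hh
    · rw [hh] at h; exact absurd (lt_trans h h') (lt_irrefl _)
    · right; exact lt_trans (lt_trans h' hh) h
  · -- fix min : vacuous
    have hc1 : 1 ≤ (Finset.univ.filter (fun z : Fin d => f z = z)).card :=
      Finset.card_pos.mpr ⟨x, by simp [h.symm]⟩
    have h1 := rnk_lt_K f h'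
    rw [pnat_fix f h.symm, pnat_min f h'] at hpq
    omega
  · -- fix fix : vacuous
    rw [huniq x y h.symm h'.symm] at hpq
    exact absurd hpq (lt_irrefl _)
  · -- fix max : always
    rcases lt_trichotomy x y with hh | hh | hh
    · exact Or.inl hh
    · right; rw [← h, hh]; exact h'
    · right; rw [← h]; exact lt_trans h' hh
  · -- max min : vacuous
    have h1 := rnk_lt_K f h'
    have h3 := rnk_lt_K f (fx_min f hinv h)
    rw [pnat_max f h, pnat_min f h'] at hpq
    omega
  · -- max fix : vacuous
    have hc1 : 1 ≤ (Finset.univ.filter (fun z : Fin d => f z = z)).card :=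
      Finset.card_pos.mpr ⟨y, by simp [h'.symm]⟩
    have h3 := rnk_lt_K f (fx_min f hinv h)
    rw [pnat_max f h, pnat_fix f h'.symm] at hpq
    omega
  · -- max max : f y < f x
    right
    have h3 := rnk_lt_K f (fx_min f hinv h)
    have h4 := rnk_lt_K f (fx_min f hinv h')
    rw [pnat_max f h, pnat_max f h'] at hpq
    have heq : rnk f (f y) < rnk f (f x) := by omega
    rcases lt_trichotomy (f y) (f x) with hh | hh | hh
    · exact hh
    · rw [hh] at heq; exact absurd heq (lt_irrefl _)
    · exact absurd (rnk_lt_rnk f (fx_min f hinv h) hh) (not_lt.mpr (le_of_lt heq))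

end props
end CheckAux

/-- For any `v ∈ 𝔖_d` there is `σ` with `σ̌ = σ` such that for all `i < j`,
either `vσ(i) < vσ(j)` or `vσ(ī) > vσ(j̄)`. -/
theorem exists_check_fixed_rearrangement (d : ℕ) (hd : 0 < d) (v : Equiv.Perm (Fin d)) :
    ∃ σ : Equiv.Perm (Fin d), checkPerm σ = σ ∧
      ∀ i j : Fin d, i < j → v (σ i) < v (σ j) ∨ v (σ j.rev) < v (σ i.rev) := by
  classical
  set f : Equiv.Perm (Fin d) := (v.symm.trans Fin.revPerm).trans v with hf
  have hfx : ∀ x, f x = v ((v.symm x).rev) := fun x => rfl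
  have hinv : ∀ x, f (f x) = x := by
    intro x
    simp [hfx, Fin.rev_rev]
  have huniq : ∀ x y : Fin d, f x = x → f y = y → x = y := by
    intro x y hx hy
    have hx' : (v.symm x).rev = v.symm x := by
      have := congrArg v.symm hx
      rw [hfx, Equiv.symm_apply_apply] at this
      exact this
    have hy' : (v.symm y).rev = v.symm y := by
      have := congrArg v.symm hy
      rw [hfx, Equiv.symm_apply_apply] at this
      exact this
    have hx'' : d - ((v.symm x : ℕ) + 1) = (v.symm x : ℕ) := congrArg Fin.val hx'
    have hy'' : d - ((v.symm y : ℕ) + 1) = (v.symm y : ℕ) := congrArg Fin.val hy'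
    have hxl : (v.symm x : ℕ) < d := (v.symm x).isLt
    have hyl : (v.symm y : ℕ) < d := (v.symm y).isLt
    have : v.symm x = v.symm y := Fin.ext (by omega)
    have := congrArg v this
    rwa [Equiv.apply_symm_apply, Equiv.apply_symm_apply] at this
  set pFun : Fin d → Fin d :=
    fun x => ⟨CheckAux.pnat f x, CheckAux.pnat_lt f hinv huniq x⟩ with hpFun
  have hpinj : Function.Injective pFun := by
    intro x y h
    exact CheckAux.pnat_inj f hinv huniq (congrArg Fin.val h)
  set P : Equiv.Perm (Fin d) :=
    Equiv.ofBijective pFun (Finite.injective_iff_bijective.mp hpinj) with hP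
  have hPapp : ∀ x, P x = pFun x := fun x => rfl
  have hPrev : ∀ x, pFun (f x) = (pFun x).rev := by
    intro x
    apply Fin.ext
    rw [Fin.val_rev]
    show CheckAux.pnat f (f x) = d - ((CheckAux.pnat f x) + 1)
    have h1 := CheckAux.pnat_sym f hinv huniq x
    have h2 := CheckAux.pnat_lt f hinv huniq x
    omega
  refine ⟨P.symm.trans v.symm, ?_, ?_⟩
  · -- symmetry
    have hkey : ∀ i : Fin d, (P.symm.trans v.symm) i.rev = ((P.symm.trans v.symm) i).rev := by
      intro i
      set x := P.symm i with hx
      have hPx : P x = i := P.apply_symm_apply i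
      have : P (f x) = i.rev := by
        rw [hPapp, hPrev, ← hPapp, hPx]
      have hPsymm : P.symm i.rev = f x := by
        rw [← this, Equiv.symm_apply_apply]
      simp only [Equiv.trans_apply, hPsymm, hfx, Equiv.symm_apply_apply]
      rfl
    apply Equiv.ext
    intro i
    show Fin.revPerm ((P.symm.trans v.symm) (Fin.revPerm i)) = _
    rw [Fin.revPerm_apply, Fin.revPerm_apply, hkey, Fin.rev_rev]
  · -- main inequality
    intro i j hij
    set x := P.symm i with hx
    set y := P.symm j with hy
    have hPx : P x = i := P.apply_symm_apply i
    have hPy : P y = j := P.apply_symm_apply j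
    have hxv : CheckAux.pnat f x = (i : ℕ) := congrArg Fin.val hPx
    have hyv : CheckAux.pnat f y = (j : ℕ) := congrArg Fin.val hPy
    have hpq : CheckAux.pnat f x < CheckAux.pnat f y := by
      rw [hxv, hyv]; exact hij
    have hrevi : P.symm i.rev = f x := by
      have : P (f x) = i.rev := by rw [hPapp, hPrev, ← hPapp, hPx]
      rw [← this, Equiv.symm_apply_apply]
    have hrevj : P.symm j.rev = f y := by
      have : P (f y) = j.rev := by rw [hPapp, hPrev, ← hPapp, hPy]
      rw [← this, Equiv.symm_apply_apply]
    rcases CheckAux.pnat_main f hinv huniq hpq with hcase | hcase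
    · left
      simp only [Equiv.trans_apply, Equiv.apply_symm_apply]
      exact hcase
    · right
      simp only [Equiv.trans_apply, hrevi, hrevj, Equiv.apply_symm_apply]
      exact hcase
end

section
/- Let $d = 2k$ be even and $v \in \mathfrak{S}_d$. Then there exists $\sigma \in \mathfrak{S}_d$ with $\check{\sigma} = \sigma$ such that for all $i \in \{1,\dots,k\}$, $v\sigma(i) = \min\{v\sigma(j) \mid i \le j \le d - i + 1\}$. -/
/-!
Call a position `p` *low* if `v p < v p.rev`; exactly one position of each pair `{p, p.rev}` is
low, so there are `k` of them. Put the low positions, sorted by increasing `v`-value, at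
`σ 0, …, σ (k-1)`, and their mirror images at the mirror places. For `i < k` and `i ≤ j ≤ i.rev`,
either `j < k` and `σ j` is a later low position, or `j.rev` lies in `[i, k)` and `σ j` is the
(higher) partner of a later low position; in both cases `v (σ i) ≤ v (σ j)`.
-/

open Finset

namespace Fin

variable {k : ℕ}

theorem rev_ne_self_of_two_mul (p : Fin (2 * k)) : p.rev ≠ p := by
  intro h
  have := congrArg Fin.val h
  rw [val_rev] at this
  omega

theorem val_rev_lt_of_not_lt {p : Fin (2 * k)} (hp : ¬(p : ℕ) < k) : (p.rev : ℕ) < k := by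
  rw [val_rev]; omega

theorem le_rev_self_of_lt {p : Fin (2 * k)} (hp : (p : ℕ) < k) : p ≤ p.rev := by
  rw [le_def, val_rev]; omega

end Fin

section LowerHalf

variable {k : ℕ} {α : Type*} [LinearOrder α] (v : Fin (2 * k) ≃ α)

def lowerHalf : Finset (Fin (2 * k)) := {p | v p < v p.rev}

variable {v}

theorem mem_lowerHalf {p : Fin (2 * k)} : p ∈ lowerHalf v ↔ v p < v p.rev := by
  simp [lowerHalf]

theorem rev_mem_lowerHalf_iff {p : Fin (2 * k)} : p.rev ∈ lowerHalf v ↔ p ∉ lowerHalf v := by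
  rw [mem_lowerHalf, mem_lowerHalf, Fin.rev_rev, not_lt,
    (v.injective.ne p.rev_ne_self_of_two_mul).le_iff_lt]

variable (v)

theorem card_lowerHalf : #(lowerHalf v) = k := by
  have hcompl : (lowerHalf v)ᶜ = (lowerHalf v).image Fin.rev := by
    ext p
    rw [mem_compl, ← rev_mem_lowerHalf_iff, mem_image]
    exact ⟨fun hp => ⟨p.rev, hp, p.rev_rev⟩, fun ⟨q, hq, hqp⟩ => hqp ▸ q.rev_rev.symm ▸ hq⟩
  have := card_add_card_compl (lowerHalf v)
  rw [hcompl, card_image_of_injective _ Fin.rev_injective, Fintype.card_fin] at this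
  omega

theorem card_map_lowerHalf : #((lowerHalf v).map v.toEmbedding) = k := by
  rw [card_map, card_lowerHalf]

noncomputable def sortedLowerHalf (x : Fin k) : Fin (2 * k) :=
  v.symm (((lowerHalf v).map v.toEmbedding).orderEmbOfFin (card_map_lowerHalf v) x)

theorem sortedLowerHalf_mem (x : Fin k) : sortedLowerHalf v x ∈ lowerHalf v := by
  have := orderEmbOfFin_mem _ (card_map_lowerHalf v) x
  rwa [mem_map_equiv] at this

theorem apply_sortedLowerHalf_strictMono : StrictMono (v ∘ sortedLowerHalf v) := by
  intro x y hxy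
  simpa [sortedLowerHalf] using
    (((lowerHalf v).map v.toEmbedding).orderEmbOfFin (card_map_lowerHalf v)).strictMono hxy

end LowerHalf

section SymmExtend

variable {k : ℕ}

def symmExtend (m : Fin k → Fin (2 * k)) (i : Fin (2 * k)) : Fin (2 * k) :=
  if h : (i : ℕ) < k then m ⟨i, h⟩ else (m ⟨i.rev, Fin.val_rev_lt_of_not_lt h⟩).rev

variable (m : Fin k → Fin (2 * k))

theorem symmExtend_of_lt {i : Fin (2 * k)} (h : (i : ℕ) < k) : symmExtend m i = m ⟨i, h⟩ :=
  dif_pos h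

theorem symmExtend_of_not_lt {i : Fin (2 * k)} (h : ¬(i : ℕ) < k) :
    symmExtend m i = (m ⟨i.rev, Fin.val_rev_lt_of_not_lt h⟩).rev :=
  dif_neg h

theorem symmExtend_rev (i : Fin (2 * k)) : symmExtend m i.rev = (symmExtend m i).rev := by
  by_cases hi : (i : ℕ) < k
  · have hi' : ¬(i.rev : ℕ) < k := by rw [Fin.val_rev]; omega
    simp only [symmExtend_of_not_lt m hi', symmExtend_of_lt m hi, Fin.rev_rev]
  · rw [symmExtend_of_lt m (Fin.val_rev_lt_of_not_lt hi), symmExtend_of_not_lt m hi, Fin.rev_rev]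

theorem symmExtend_injective (hm : Function.Injective m) (hdisj : ∀ x y, m x ≠ (m y).rev) :
    Function.Injective (symmExtend m) := by
  intro i j hij
  by_cases hi : (i : ℕ) < k <;> by_cases hj : (j : ℕ) < k
  · rw [symmExtend_of_lt m hi, symmExtend_of_lt m hj] at hij
    exact Fin.ext (Fin.mk.inj_iff.mp (hm hij))
  · rw [symmExtend_of_lt m hi, symmExtend_of_not_lt m hj] at hij
    exact absurd hij (hdisj _ _)
  · rw [symmExtend_of_not_lt m hi, symmExtend_of_lt m hj] at hij
    exact absurd hij.symm (hdisj _ _)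
  · rw [symmExtend_of_not_lt m hi, symmExtend_of_not_lt m hj] at hij
    have := congrArg Fin.val (hm (Fin.rev_injective hij))
    rw [Fin.val_rev, Fin.val_rev] at this
    omega

noncomputable def symmExtendPerm (hm : Function.Injective m) (hdisj : ∀ x y, m x ≠ (m y).rev) :
    Equiv.Perm (Fin (2 * k)) :=
  Equiv.ofBijective _ (Finite.injective_iff_bijective.mp (symmExtend_injective m hm hdisj))

theorem checkPerm_symmExtendPerm (hm : Function.Injective m) (hdisj : ∀ x y, m x ≠ (m y).rev) :
    checkPerm (symmExtendPerm m hm hdisj) = symmExtendPerm m hm hdisj := by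
  ext i
  simp [checkPerm, symmExtendPerm, symmExtend_rev]

end SymmExtend

section Interval

variable {k : ℕ} {α : Type*} [LinearOrder α] (v : Fin (2 * k) ≃ α)

theorem sortedLowerHalf_injective : Function.Injective (sortedLowerHalf v) :=
  (apply_sortedLowerHalf_strictMono v).injective.of_comp

theorem sortedLowerHalf_ne_rev (x y : Fin k) : sortedLowerHalf v x ≠ (sortedLowerHalf v y).rev :=
  fun h => rev_mem_lowerHalf_iff.mp (h ▸ sortedLowerHalf_mem v x) (sortedLowerHalf_mem v y)

theorem apply_symmExtend_le_of_mem_Icc {i j : Fin (2 * k)} (hi : (i : ℕ) < k)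
    (hj : j ∈ Icc i i.rev) : v (symmExtend (sortedLowerHalf v) i) ≤
      v (symmExtend (sortedLowerHalf v) j) := by
  have hmono := (apply_sortedLowerHalf_strictMono v).monotone
  rw [mem_Icc, Fin.le_def, Fin.le_def, Fin.val_rev] at hj
  rw [symmExtend_of_lt _ hi]
  by_cases hjk : (j : ℕ) < k
  · rw [symmExtend_of_lt _ hjk]
    exact hmono (Fin.mk_le_mk.mpr hj.1)
  · rw [symmExtend_of_not_lt _ hjk]
    calc v (sortedLowerHalf v ⟨i, hi⟩)
        ≤ v (sortedLowerHalf v ⟨j.rev, Fin.val_rev_lt_of_not_lt hjk⟩) :=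
          hmono (Fin.mk_le_mk.mpr (by rw [Fin.val_rev]; omega))
      _ ≤ v (sortedLowerHalf v ⟨j.rev, Fin.val_rev_lt_of_not_lt hjk⟩).rev :=
          (mem_lowerHalf.mp (sortedLowerHalf_mem v _)).le

end Interval

/-- For `d = 2k` even and any `v ∈ 𝔖_d`, there is `σ` with `σ̌ = σ` such that for each
`i ∈ {1,…,k}`, `vσ(i) = min { vσ(j) | j ∈ [i, ī] }` (where `ī = d-i+1`). -/
theorem exists_check_fixed_min_on_intervals (k : ℕ)
    (v : Equiv.Perm (Fin (2 * k))) :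
    ∃ σ : Equiv.Perm (Fin (2 * k)), checkPerm σ = σ ∧
      ∀ i : Fin (2 * k), ∀ _hi : (i : ℕ) < k,
        v (σ i) = ((Finset.Icc i i.rev).image fun j => v (σ j)).min'
          (Finset.Nonempty.image ⟨i, Finset.mem_Icc.mpr
            ⟨le_refl i, by simp only [Fin.le_def, Fin.val_rev]; omega⟩⟩ _) := by
  let σ := symmExtendPerm _ (sortedLowerHalf_injective v) (sortedLowerHalf_ne_rev v)
  refine ⟨σ, checkPerm_symmExtendPerm _ _ _, fun i hi => ?_⟩
  refine ((min'_eq_iff _ _ _).mpr ⟨?_, ?_⟩).symm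
  · exact mem_image_of_mem _ (mem_Icc.mpr ⟨le_rfl, Fin.le_rev_self_of_lt hi⟩)
  · exact forall_mem_image.mpr fun j hj => apply_symmExtend_le_of_mem_Icc v hi hj
end

section
/- Let $X \to S$ be a flat morphism of schemes and $T \to S$ a schematically dominant quasi-compact morphism. If the base change $X_T = X \times_S T$ is an integral scheme, then $X$ is an integral scheme. -/
open AlgebraicGeometry CategoryTheory CategoryTheory.Limits

open scoped TensorProduct

/-- A morphism of schemes is flat if all its stalk maps are flat ring maps. -/
def SchemeHomFlat {X Y : Scheme} (f : X ⟶ Y) : Prop :=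
  ∀ x : X, letI := (f.stalkMap x).hom.toAlgebra
    Module.Flat (Y.presheaf.stalk (f.base x)) (X.presheaf.stalk x)

/-- A morphism `f : T ⟶ S` is schematically dominant if `𝒪_S ⟶ f_* 𝒪_T` is injective. -/
def SchematicallyDominant {T S : Scheme} (f : T ⟶ S) : Prop :=
  ∀ U : S.Opens, Function.Injective (f.app U)

lemma appLE_congr_hom {X Y : Scheme} {a b : X ⟶ Y} (h : a = b) (U : Y.Opens)
    (V : X.Opens) (e : V ≤ a ⁻¹ᵁ U) (e' : V ≤ b ⁻¹ᵁ U) :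
    a.appLE U V e = b.appLE U V e' := by
  subst h; rfl

lemma appLE_top_eq_app_top {X Y : Scheme} (f : X ⟶ Y)
    (h : (⊤ : X.Opens) ≤ f ⁻¹ᵁ (⊤ : Y.Opens)) :
    f.appLE ⊤ ⊤ h = f.app ⊤ := by
  rw [Scheme.Hom.appLE, show homOfLE h = 𝟙 (⊤ : X.Opens) from rfl]
  exact (Scheme.Hom.app_eq_appLE f (U := ⊤)).symm

set_option synthInstance.maxHeartbeats 1000000 in
set_option maxHeartbeats 1000000 in
lemma germ_zero_aux {X S T : Scheme} (f : X ⟶ S) (g : T ⟶ S)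
    (hf : SchemeHomFlat f) [QuasiCompact g] (hg : SchematicallyDominant g)
    (U : X.Opens) (s : Γ(X, U)) (h0 : (pullback.fst f g).app U s = 0)
    (x : X) (hx : x ∈ U) : X.presheaf.germ U x hx s = 0 := by
  classical
  obtain ⟨_, ⟨V, hV, rfl⟩, hs', -⟩ := S.isBasis_affineOpens.exists_subset_of_mem_open
    (Set.mem_univ (f.base x)) isOpen_univ
  have hcpt : IsCompact ((g ⁻¹ᵁ V : T.Opens) : Set T) :=
    QuasiCompact.isCompact_preimage (f := g) _ V.2 hV.isCompact
  obtain ⟨𝒲, hfin, hcover⟩ := (isCompact_and_isOpen_iff_finite_and_eq_biUnion_affineOpens (U := _)).mp ⟨hcpt, (g ⁻¹ᵁ V).2⟩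
  haveI : Fintype ↥𝒲 := hfin.fintype
  have hWV : ∀ i : 𝒲, ((i : T.affineOpens) : T.Opens) ≤ g ⁻¹ᵁ V := by
    intro i t ht
    have h1 : (t : T) ∈ (↑(g ⁻¹ᵁ V) : Set T) := by
      rw [hcover]; exact Set.mem_biUnion i.2 ht
    exact h1
  letI algCR : Algebra Γ(S, V) (S.presheaf.stalk (f.base x)) :=
    S.presheaf.algebra_section_stalk ⟨f.base x, hs'⟩
  letI algRA : Algebra (S.presheaf.stalk (f.base x)) (X.presheaf.stalk x) :=
    (f.stalkMap x).hom.toAlgebra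
  letI algCA : Algebra Γ(S, V) (X.presheaf.stalk x) :=
    ((S.presheaf.germ V (f.base x) hs') ≫ f.stalkMap x).hom.toAlgebra
  haveI : IsScalarTower Γ(S, V) (S.presheaf.stalk (f.base x)) (X.presheaf.stalk x) :=
    IsScalarTower.of_algebraMap_eq' rfl
  haveI flatRA : Module.Flat (S.presheaf.stalk (f.base x)) (X.presheaf.stalk x) := hf x
  haveI := hV.isLocalization_stalk ⟨f.base x, hs'⟩
  haveI flatCR : Module.Flat Γ(S, V) (S.presheaf.stalk (f.base x)) :=
    IsLocalization.flat _ (hV.primeIdealOf ⟨f.base x, hs'⟩).asIdeal.primeCompl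
  haveI flatCA : Module.Flat Γ(S, V) (X.presheaf.stalk x) :=
    Module.Flat.trans Γ(S, V) (S.presheaf.stalk (f.base x)) (X.presheaf.stalk x)
  letI algB : ∀ i : 𝒲, Algebra Γ(S, V) Γ(T, ((i : T.affineOpens) : T.Opens)) :=
    fun i => (g.appLE V _ (hWV i)).hom.toAlgebra
  have hphi : Function.Injective
      (algebraMap Γ(S, V) (Π i : 𝒲, Γ(T, ((i : T.affineOpens) : T.Opens)))) := by
    rw [injective_iff_map_eq_zero]
    intro c hc
    have hc' : ∀ i : 𝒲, g.appLE V _ (hWV i) c = 0 := fun i => congrFun hc i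
    have h1 : g.app V c = 0 := by
      apply TopCat.Presheaf.section_ext T.sheaf (g ⁻¹ᵁ V)
      intro t ht
      refine Eq.trans ?_ (map_zero _).symm
      have ht' : (t : T) ∈ ⋃ i ∈ 𝒲, (i : Set T) := hcover ▸ ht
      simp only [Set.mem_iUnion] at ht'
      obtain ⟨i, hi, hti⟩ := ht'
      have := T.presheaf.germ_res_apply
        (homOfLE (hWV ⟨i, hi⟩) : ((i : T.affineOpens) : T.Opens) ⟶ g ⁻¹ᵁ V) t hti (g.app V c)
      show T.presheaf.germ (g ⁻¹ᵁ V) t ht ((Scheme.Hom.app g V) c) = 0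
      rw [← this]
      have h2 : T.presheaf.map (homOfLE (hWV ⟨i, hi⟩)).op (g.app V c)
          = g.appLE V _ (hWV ⟨i, hi⟩) c := rfl
      rw [h2, hc' ⟨i, hi⟩, map_zero]
    have := hg V (a₁ := c) (a₂ := 0) (by rw [h1, map_zero])
    exact this
  -- tensor injectivity
  have hinj : ∀ a : X.presheaf.stalk x,
      (∀ i : 𝒲, (a ⊗ₜ[Γ(S, V)] (1 : Γ(T, ((i : T.affineOpens) : T.Opens)))) = 0) → a = 0 := by
    intro a ha
    have h1 : Function.Injective (LinearMap.lTensor (X.presheaf.stalk x)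
        (Algebra.linearMap Γ(S, V) (Π i : 𝒲, Γ(T, ((i : T.affineOpens) : T.Opens))))) :=
      Module.Flat.lTensor_preserves_injective_linearMap _ hphi
    have h2 : (a ⊗ₜ[Γ(S, V)] (1 : Π i : 𝒲, Γ(T, ((i : T.affineOpens) : T.Opens)))) = 0 := by
      apply (TensorProduct.piRight Γ(S, V) Γ(S, V) _ _).injective
      rw [map_zero]
      funext i
      rw [TensorProduct.piRight_apply, TensorProduct.piRightHom_tmul]
      exact ha i
    have h3 : (a ⊗ₜ[Γ(S, V)] (1 : Γ(S, V))) = 0 := by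
      apply h1
      rw [LinearMap.lTensor_tmul, map_zero]
      simpa using h2
    have h4 := congrArg (TensorProduct.rid Γ(S, V) (X.presheaf.stalk x)) h3
    simpa using h4
  apply hinj (X.presheaf.germ U x hx s)
  intro i
  have hW : IsAffineOpen ((i : T.affineOpens) : T.Opens) := (i : T.affineOpens).2
  set AB : CommRingCat := CommRingCat.of
    ((X.presheaf.stalk x) ⊗[Γ(S, V)] Γ(T, ((i : T.affineOpens) : T.Opens))) with hAB
  let inclA : X.presheaf.stalk x ⟶ AB :=
    CommRingCat.ofHom (Algebra.TensorProduct.includeLeftRingHom (R := Γ(S, V))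
      (A := X.presheaf.stalk x) (B := Γ(T, ((i : T.affineOpens) : T.Opens))))
  let inclB : Γ(T, ((i : T.affineOpens) : T.Opens)) ⟶ AB :=
    CommRingCat.ofHom (Algebra.TensorProduct.includeRight (R := Γ(S, V))
      (A := X.presheaf.stalk x) (B := Γ(T, ((i : T.affineOpens) : T.Opens)))).toRingHom
  have comm : (Spec.map inclA ≫ X.fromSpecStalk x) ≫ f
      = (Spec.map inclB ≫ hW.fromSpec) ≫ g := by
    rw [Category.assoc, Category.assoc, ← Scheme.SpecMap_stalkMap_fromSpecStalk f (x := x)]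
    rw [← IsAffineOpen.SpecMap_appLE_fromSpec g hV hW (hWV i)]
    rw [← hV.fromSpecStalk_eq_fromSpecStalk (hxU := hs')]
    unfold IsAffineOpen.fromSpecStalk
    rw [← Spec.map_comp_assoc, ← Spec.map_comp_assoc, ← Spec.map_comp_assoc]
    congr 2
    refine CommRingCat.hom_ext (RingHom.ext fun c => ?_)
    exact RingHom.congr_fun (Algebra.TensorProduct.includeLeftRingHom_comp_algebraMap
      (R := Γ(S, V)) (A := X.presheaf.stalk x)
      (B := Γ(T, ((i : T.affineOpens) : T.Opens)))) c
  have e : (⊤ : (Spec AB).Opens) ≤ (Spec.map inclA ≫ X.fromSpecStalk x) ⁻¹ᵁ U := by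
    intro z _
    show (Spec.map inclA ≫ X.fromSpecStalk x).base z ∈ U
    rw [Scheme.Hom.comp_apply]
    have hr : (X.fromSpecStalk x).base ((Spec.map inclA).base z)
        ∈ Set.range (X.fromSpecStalk x).base := Set.mem_range_self _
    rw [Scheme.range_fromSpecStalk] at hr
    exact hr.mem_open U.2 hx
  have hlf : pullback.lift (Spec.map inclA ≫ X.fromSpecStalk x)
      (Spec.map inclB ≫ hW.fromSpec) comm ≫ pullback.fst f g
      = Spec.map inclA ≫ X.fromSpecStalk x := pullback.lift_fst _ _ _
  have e' : (⊤ : (Spec AB).Opens) ≤ pullback.lift (Spec.map inclA ≫ X.fromSpecStalk x)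
      (Spec.map inclB ≫ hW.fromSpec) comm ⁻¹ᵁ (pullback.fst f g ⁻¹ᵁ U) := by
    intro z hz
    have h10 := e hz
    rw [← hlf] at h10
    exact h10
  have hu0 : (Spec.map inclA ≫ X.fromSpecStalk x).appLE U ⊤ e s = 0 := by
    rw [appLE_congr_hom hlf.symm U ⊤ e e']
    show ((pullback.lift (Spec.map inclA ≫ X.fromSpecStalk x) (Spec.map inclB ≫ hW.fromSpec)
      comm).appLE (pullback.fst f g ⁻¹ᵁ U) ⊤ e') ((pullback.fst f g).app U s) = 0
    rw [h0, map_zero]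
  have hcomp : (Spec.map inclA ≫ X.fromSpecStalk x).appLE U ⊤ e
      = X.presheaf.germ U x hx ≫ inclA ≫ (Scheme.ΓSpecIso AB).inv := by
    rw [Scheme.Hom.comp_appLE, Scheme.fromSpecStalk_app (U := U) hx]
    rw [Category.assoc, Category.assoc, Scheme.Hom.map_appLE (f := Spec.map inclA)
      (U := X.fromSpecStalk x ⁻¹ᵁ U) (V := ⊤) (e := e)]
    rw [Scheme.ΓSpecIso_inv_naturality]
    rw [appLE_top_eq_app_top]
  have h6 : (X.presheaf.germ U x hx ≫ inclA ≫ (Scheme.ΓSpecIso AB).inv) s = 0 := by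
    rw [← hcomp]; exact hu0
  have h7 : inclA (X.presheaf.germ U x hx s) = 0 := by
    apply (Scheme.ΓSpecIso AB).symm.commRingCatIsoToRingEquiv.injective
    rw [map_zero]
    exact h6
  exact h7

/-- If `X → S` is flat and `T → S` is schematically dominant and quasi-compact, and the
base change `X ×_S T` is integral, then `X` is integral. -/
theorem isIntegral_of_flat_of_schematicallyDominant
    {X S T : Scheme} (f : X ⟶ S) (g : T ⟶ S)
    (hf : SchemeHomFlat f) [QuasiCompact g] (hg : SchematicallyDominant g)
    [IsIntegral (pullback f g)] : IsIntegral X := by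
  haveI : Nonempty X :=
    ⟨(pullback.fst f g).base
      (inferInstance : AlgebraicGeometry.IsIntegral (pullback f g)).nonempty.some⟩
  have hinj : ∀ U : X.Opens, Function.Injective ((pullback.fst f g).app U) := by
    intro U
    rw [injective_iff_map_eq_zero]
    intro s hs
    apply TopCat.Presheaf.section_ext X.sheaf U s 0
    intro x hxU
    rw [map_zero]
    exact germ_zero_aux f g hf hg U s hs x hxU
  constructor
  · infer_instance
  · intro U hU
    by_cases hP : Nonempty ((pullback.fst f g) ⁻¹ᵁ U)
    · haveI := hP
      exact Function.Injective.isDomain ((pullback.fst f g).app U).hom (hinj U)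
    · exfalso
      have hbot : (pullback.fst f g) ⁻¹ᵁ U = ⊥ := by
        rw [← TopologicalSpace.Opens.not_nonempty_iff_eq_bot]
        simpa using hP
      haveI : Subsingleton Γ(pullback f g, (pullback.fst f g) ⁻¹ᵁ U) := by
        have h := CommRingCat.subsingleton_of_isTerminal
          ((pullback f g).sheaf.isTerminalOfEqEmpty hbot)
        exact h
      have hsub : Subsingleton Γ(X, U) := ⟨fun a b => hinj U (by
        apply Subsingleton.elim)⟩
      exact not_subsingleton_iff_nontrivial.mpr
        (inferInstance : Nontrivial Γ(X, U)) hsub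
end
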